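/- Define J : L²_∘(T¹) × [0,1] → [0,∞] by J(v,s) = s^{-η}(∑_{m∈ℤ}|m|^{4s}|v̂(m)|²)^{1/2} for s > 0, J(0,0) = 0, and J(v,0) = +∞ for v ≠ 0, where η > 0 is fixed. Then J is sequentially lower semicontinuous on L²_∘(T¹) × [0,1] when L²_∘(T¹) carries the weak topology: if vⁿ ⇀ v weakly in L² and sₙ → s in [0,1], then J(v,s) ≤ liminf J(vⁿ,sₙ). -/

import Mathlib

/-!
For `s > 0` every term `|m|^{4sₙ} |v̂ⁿ(m)|²` converges, since weak convergence gives
convergence of each Fourier coefficient, and Fatou's lemma for sums yields lower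
semicontinuity of the sum; the prefactor `sₙ^{-η}` converges to `s^{-η}`.
For `s = 0` and `v ≠ 0` pick `m ≠ 0` with `v̂(m) ≠ 0` (here the zero mean of `v` enters):
then `J(vⁿ, sₙ) ≥ sₙ^{-η} |v̂ⁿ(m)| → ∞`.
-/

open MeasureTheory AddCircle Filter
open scoped Real NNReal ENNReal InnerProductSpace Classical

instance : Fact (0 < 2 * Real.pi) := ⟨by positivity⟩

/-- The adaptive-order fractional Laplacian functional
`J(v,s) = s^{-η} (∑_{m} |m|^{4s} |v̂(m)|²)^{1/2}` for `s > 0`, with `J(0,0) = 0` and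
`J(v,0) = +∞` for `v ≠ 0`. -/
noncomputable def Jfrac (η : ℝ)
    (v : Lp ℂ 2 (haarAddCircle : Measure (AddCircle (2 * Real.pi)))) (s : ℝ) : ℝ≥0∞ :=
  if s = 0 then (if v = 0 then 0 else ⊤)
  else ENNReal.ofReal (s ^ (-η)) *
    (∑' m : ℤ, ENNReal.ofReal
        (|(m : ℝ)| ^ (4 * s) * ‖fourierCoeff (v : AddCircle (2 * Real.pi) → ℂ) m‖ ^ 2))
      ^ ((2 : ℝ)⁻¹)

local notation "𝕋" => AddCircle (2 * Real.pi)

local notation "L²" => Lp ℂ 2 (haarAddCircle : Measure 𝕋)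

lemma fourierCoeff_eq_inner (w : L²) (m : ℤ) :
    fourierCoeff (w : 𝕋 → ℂ) m = ⟪fourierBasis m, w⟫_ℂ := by
  rw [← fourierBasis_repr, fourierBasis.repr_apply_apply]

lemma exists_fourierCoeff_ne_zero {w : L²} (hw : w ≠ 0) :
    ∃ m : ℤ, fourierCoeff (w : 𝕋 → ℂ) m ≠ 0 := by
  by_contra! h
  refine hw (fourierBasis.repr.map_eq_zero_iff.mp (lp.ext (funext fun m => ?_)))
  simpa [fourierBasis_repr] using h m

lemma ENNReal.tsum_liminf_le_liminf_tsum {ι α : Type*} {l : Filter ι} [l.IsCountablyGenerated]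
    (f : ι → α → ℝ≥0∞) :
    ∑' a, liminf (fun i => f i a) l ≤ liminf (fun i => ∑' a, f i a) l := by
  let : MeasurableSpace α := ⊤
  simpa [lintegral_count] using
    lintegral_liminf_le (μ := Measure.count) (u := l) fun i => Measurable.of_discrete (f := f i)

noncomputable def fracSum (a : ℤ → ℂ) (t : ℝ) : ℝ≥0∞ :=
  ∑' m : ℤ, ENNReal.ofReal (|(m : ℝ)| ^ (4 * t) * ‖a m‖ ^ 2)

lemma Jfrac_of_ne_zero (η : ℝ) (w : L²) {t : ℝ} (ht : t ≠ 0) :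
    Jfrac η w t = ENNReal.ofReal (t ^ (-η)) *
      fracSum (fourierCoeff (w : 𝕋 → ℂ)) t ^ (2 : ℝ)⁻¹ :=
  if_neg ht

lemma enorm_le_fracSum_rpow (a : ℤ → ℂ) {t : ℝ} (ht : 0 ≤ t) {m : ℤ} (hm : m ≠ 0) :
    ‖a m‖ₑ ≤ fracSum a t ^ (2 : ℝ)⁻¹ := by
  have hone : (1 : ℝ) ≤ |(m : ℝ)| ^ (4 * t) :=
    Real.one_le_rpow (by exact_mod_cast Int.one_le_abs hm) (by positivity)
  have hterm : ‖a m‖ₑ ^ (2 : ℝ) ≤ fracSum a t := by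
    refine le_trans ?_ (ENNReal.le_tsum m)
    rw [ENNReal.rpow_two, ← ofReal_norm, ← ENNReal.ofReal_pow (norm_nonneg _)]
    exact ENNReal.ofReal_le_ofReal (le_mul_of_one_le_left (by positivity) hone)
  calc ‖a m‖ₑ = (‖a m‖ₑ ^ (2 : ℝ)) ^ (2 : ℝ)⁻¹ := by
        rw [← ENNReal.rpow_mul, mul_inv_cancel₀ two_ne_zero, ENNReal.rpow_one]
    _ ≤ fracSum a t ^ (2 : ℝ)⁻¹ := ENNReal.rpow_le_rpow hterm (by norm_num)

lemma ofReal_rpow_neg_mul_enorm_le_Jfrac {η : ℝ} (w : L²) {t : ℝ} (ht : 0 ≤ t)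
    {m : ℤ} (hm : m ≠ 0) :
    ENNReal.ofReal t ^ (-η) * ‖fourierCoeff (w : 𝕋 → ℂ) m‖ₑ ≤
      Jfrac η w t := by
  rcases ht.eq_or_lt with rfl | htpos
  · by_cases hw : w = 0
    · subst hw
      rw [fourierCoeff_eq_inner, inner_zero_right, enorm_zero, mul_zero]
      exact zero_le
    · simp [Jfrac, hw]
  · rw [Jfrac_of_ne_zero η w htpos.ne', ENNReal.ofReal_rpow_of_pos htpos]
    gcongr
    exact enorm_le_fracSum_rpow _ ht hm

section Convergence

variable {vn : ℕ → L²} {v : L²} {sn : ℕ → ℝ} {s : ℝ}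

/-- `s ≠ 0` is needed because `t ↦ |m| ^ (4 * t)` is discontinuous at `t = 0` when `m = 0`
(`0 ^ 0 = 1`). -/
lemma fracSum_le_liminf (hs : s ≠ 0)
    (hcoeff : ∀ m : ℤ, Tendsto (fun n => fourierCoeff (vn n : 𝕋 → ℂ) m)
      atTop (nhds (fourierCoeff (v : 𝕋 → ℂ) m)))
    (hconv : Tendsto sn atTop (nhds s)) :
    fracSum (fourierCoeff (v : 𝕋 → ℂ)) s ≤
      liminf (fun n => fracSum (fourierCoeff (vn n : 𝕋 → ℂ)) (sn n)) atTop := by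
  have hterm : ∀ m : ℤ, Tendsto
      (fun n => ENNReal.ofReal (|(m : ℝ)| ^ (4 * sn n) *
        ‖fourierCoeff (vn n : 𝕋 → ℂ) m‖ ^ 2)) atTop
      (nhds (ENNReal.ofReal (|(m : ℝ)| ^ (4 * s) *
        ‖fourierCoeff (v : 𝕋 → ℂ) m‖ ^ 2))) := fun m =>
    ENNReal.tendsto_ofReal <|
      ((Real.continuousAt_const_rpow' (mul_ne_zero four_ne_zero hs)).tendsto.comp
        (hconv.const_mul 4)).mul ((hcoeff m).norm.pow 2)
  calc fracSum (fourierCoeff (v : 𝕋 → ℂ)) s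
      = ∑' m : ℤ, liminf (fun n => ENNReal.ofReal (|(m : ℝ)| ^ (4 * sn n) *
          ‖fourierCoeff (vn n : 𝕋 → ℂ) m‖ ^ 2)) atTop :=
        tsum_congr fun m => (hterm m).liminf_eq.symm
    _ ≤ _ := ENNReal.tsum_liminf_le_liminf_tsum _

lemma Jfrac_le_liminf_of_ne_zero (η : ℝ) (hs : s ≠ 0)
    (hcoeff : ∀ m : ℤ, Tendsto (fun n => fourierCoeff (vn n : 𝕋 → ℂ) m)
      atTop (nhds (fourierCoeff (v : 𝕋 → ℂ) m)))
    (hconv : Tendsto sn atTop (nhds s)) :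
    Jfrac η v s ≤ liminf (fun n => Jfrac η (vn n) (sn n)) atTop := by
  have hprefactor : Tendsto (fun n => ENNReal.ofReal (sn n ^ (-η))) atTop
      (nhds (ENNReal.ofReal (s ^ (-η)))) :=
    ENNReal.tendsto_ofReal ((Real.continuousAt_rpow_const s (-η) (Or.inl hs)).tendsto.comp hconv)
  have hroot : fracSum (fourierCoeff (v : 𝕋 → ℂ)) s ^ (2 : ℝ)⁻¹ ≤
      liminf (fun n => fracSum (fourierCoeff (vn n : 𝕋 → ℂ)) (sn n)
        ^ (2 : ℝ)⁻¹) atTop := by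
    calc _ ≤ liminf (fun n => fracSum (fourierCoeff (vn n : 𝕋 → ℂ)) (sn n)) atTop ^ (2 : ℝ)⁻¹ :=
          ENNReal.rpow_le_rpow (fracSum_le_liminf hs hcoeff hconv) (by norm_num)
      _ = _ := (ENNReal.monotone_rpow_of_nonneg (by norm_num)).map_liminf_of_continuousAt _
        ENNReal.continuous_rpow_const.continuousAt
  have hJ : ∀ᶠ n in atTop, Jfrac η (vn n) (sn n) = ENNReal.ofReal (sn n ^ (-η)) *
      fracSum (fourierCoeff (vn n : 𝕋 → ℂ)) (sn n) ^ (2 : ℝ)⁻¹ :=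
    (hconv.eventually_ne hs).mono fun n hn => Jfrac_of_ne_zero η (vn n) hn
  calc Jfrac η v s
      = liminf (fun n => ENNReal.ofReal (sn n ^ (-η))) atTop *
          fracSum (fourierCoeff (v : 𝕋 → ℂ)) s ^ (2 : ℝ)⁻¹ := by
        rw [hprefactor.liminf_eq, Jfrac_of_ne_zero η v hs]
    _ ≤ _ := by gcongr
    _ ≤ _ := ENNReal.le_liminf_mul
    _ = _ := (liminf_congr hJ).symm

lemma Jfrac_zero_le_liminf {η : ℝ} (hη : 0 < η)
    (hv0 : fourierCoeff (v : 𝕋 → ℂ) 0 = 0) (hsn : ∀ n, 0 ≤ sn n)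
    (hcoeff : ∀ m : ℤ, Tendsto (fun n => fourierCoeff (vn n : 𝕋 → ℂ) m)
      atTop (nhds (fourierCoeff (v : 𝕋 → ℂ) m)))
    (hconv : Tendsto sn atTop (nhds 0)) :
    Jfrac η v 0 ≤ liminf (fun n => Jfrac η (vn n) (sn n)) atTop := by
  by_cases hv : v = 0
  · simp [Jfrac, hv]
  obtain ⟨m, hm⟩ := exists_fourierCoeff_ne_zero hv
  have hm0 : m ≠ 0 := by
    rintro rfl
    exact hm hv0
  have hprefactor : Tendsto (fun n => ENNReal.ofReal (sn n) ^ (-η)) atTop (nhds ⊤) := by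
    have := (ENNReal.continuous_rpow_const (y := -η)).tendsto _ |>.comp
      (ENNReal.tendsto_ofReal hconv)
    rwa [ENNReal.ofReal_zero, ENNReal.zero_rpow_of_neg (neg_neg_iff_pos.2 hη)] at this
  have hbound : Tendsto (fun n => ENNReal.ofReal (sn n) ^ (-η) *
      ‖fourierCoeff (vn n : 𝕋 → ℂ) m‖ₑ) atTop (nhds ⊤) := by
    simpa [ENNReal.top_mul (enorm_ne_zero.2 hm)] using
      ENNReal.Tendsto.mul hprefactor (Or.inr enorm_ne_top)
        ((continuous_enorm.tendsto _).comp (hcoeff m)) (Or.inl (enorm_ne_zero.2 hm))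
  calc Jfrac η v 0 ≤ liminf (fun n => ENNReal.ofReal (sn n) ^ (-η) *
        ‖fourierCoeff (vn n : 𝕋 → ℂ) m‖ₑ) atTop := by
        rw [hbound.liminf_eq]
        exact le_top
    _ ≤ _ := liminf_le_liminf (Eventually.of_forall fun n =>
        ofReal_rpow_neg_mul_enorm_le_Jfrac _ (hsn n) hm0)

end Convergence

theorem stmt4_general (η : ℝ) (hη : 0 < η)
    (vn : ℕ → Lp ℂ 2 (haarAddCircle : Measure (AddCircle (2 * Real.pi))))
    (v : Lp ℂ 2 (haarAddCircle : Measure (AddCircle (2 * Real.pi))))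
    (sn : ℕ → ℝ) (s : ℝ)
    (hv0 : fourierCoeff (v : AddCircle (2 * Real.pi) → ℂ) 0 = 0)
    (hsn : ∀ n, sn n ∈ Set.Icc (0 : ℝ) 1) (hs : s ∈ Set.Icc (0 : ℝ) 1)
    (hweak : ∀ φ : Lp ℂ 2 (haarAddCircle : Measure (AddCircle (2 * Real.pi))),
      Tendsto (fun n => ⟪φ, vn n⟫_ℂ) atTop (nhds ⟪φ, v⟫_ℂ))
    (hconv : Tendsto sn atTop (nhds s)) :
    Jfrac η v s ≤ liminf (fun n => Jfrac η (vn n) (sn n)) atTop := by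
  have hcoeff : ∀ m : ℤ, Tendsto (fun n => fourierCoeff (vn n : 𝕋 → ℂ) m)
      atTop (nhds (fourierCoeff (v : 𝕋 → ℂ) m)) := fun m => by
    simpa only [fourierCoeff_eq_inner] using hweak (fourierBasis m)
  rcases hs.1.eq_or_lt with rfl | hspos
  · exact Jfrac_zero_le_liminf hη hv0 (fun n => (hsn n).1) hcoeff hconv
  · exact Jfrac_le_liminf_of_ne_zero η hspos.ne' hcoeff hconv

/-- the functional `J` is sequentially lower semicontinuous on
`L²_∘(T¹) × [0,1]`, where `L²_∘(T¹)` carries the weak topology: if `vⁿ ⇀ v` weakly in `L²`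
(zero-mean functions) and `sₙ → s` in `[0,1]`, then `J(v,s) ≤ liminf J(vⁿ,sₙ)`. -/
theorem stmt4 (η : ℝ) (hη : 0 < η)
    (vn : ℕ → Lp ℂ 2 (haarAddCircle : Measure (AddCircle (2 * Real.pi))))
    (v : Lp ℂ 2 (haarAddCircle : Measure (AddCircle (2 * Real.pi))))
    (sn : ℕ → ℝ) (s : ℝ)
    (hvn0 : ∀ n, fourierCoeff (vn n : AddCircle (2 * Real.pi) → ℂ) 0 = 0)
    (hv0 : fourierCoeff (v : AddCircle (2 * Real.pi) → ℂ) 0 = 0)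
    (hsn : ∀ n, sn n ∈ Set.Icc (0 : ℝ) 1) (hs : s ∈ Set.Icc (0 : ℝ) 1)
    (hweak : ∀ φ : Lp ℂ 2 (haarAddCircle : Measure (AddCircle (2 * Real.pi))),
      Tendsto (fun n => ⟪φ, vn n⟫_ℂ) atTop (nhds ⟪φ, v⟫_ℂ))
    (hconv : Tendsto sn atTop (nhds s)) :
    Jfrac η v s ≤ liminf (fun n => Jfrac η (vn n) (sn n)) atTop :=
  stmt4_general η hη vn v sn s hv0 hsn hs hweak hconv
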